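/- The discretized information gain objective is asymptotically consistent: if Ω is a set of M i.i.d. samples from the belief b, then (1/M) ∑_{q∈Q} ∑_{ω̄∈Ω} P(q|Q,ω̄) · log₂( M·P(q|Q,ω̄) / ∑_{ω'∈Ω} P(q|Q,ω') ) converges almost surely as M → ∞ to the mutual information I(ω; q | Q, b) = E_{ω,q}[ log₂( P(q|Q,ω) / E_{ω'}[P(q|Q,ω')] ) ]. -/

import Mathlib

/-!
Let `m_q(M)` and `h_q(M)` be the empirical means of `P(q|·)` and of `P(q|·) log₂ P(q|·)` over
the first `M` samples. Since the factor `M` in the numerator turns the normalizing sum into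
`M · m_q(M)`, the objective is exactly `∑_q (h_q(M) - m_q(M) log₂ m_q(M))`, and the mutual
information has the same shape with the population means `E[P(q|ω)] > 0` and
`E[P(q|ω) log₂ P(q|ω)]` in their place. The strong law of large numbers for these finitely many
functions of the samples and continuity of `log` away from `0` give the almost sure convergence.
-/

open MeasureTheory ProbabilityTheory Filter Topology

section LawOfLargeNumbers

variable {Θ Ω Ω' : Type*} [MeasurableSpace Θ] [MeasurableSingletonClass Θ]
  [MeasurableSpace Ω] [MeasurableSpace Ω'] {μ : Measure Ω} {ν : Measure Ω'}

lemma identDistrib_of_measure_preimage_singleton [Countable Θ] {X : Ω → Θ} {Y : Ω' → Θ}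
    (hX : Measurable X) (hY : Measurable Y) (h : ∀ w, μ (X ⁻¹' {w}) = ν (Y ⁻¹' {w})) :
    IdentDistrib X Y μ ν where
  aemeasurable_fst := hX.aemeasurable
  aemeasurable_snd := hY.aemeasurable
  map_eq := Measure.ext_of_singleton fun w => by
    rw [Measure.map_apply hX (measurableSet_singleton w),
      Measure.map_apply hY (measurableSet_singleton w), h]

variable [Fintype Θ] [IsFiniteMeasure μ] {b : Θ → ℝ}

lemma integral_comp_eq_sum_mul {X : Ω → Θ} (hX : Measurable X) (hb : ∀ w, 0 ≤ b w)
    (hlaw : ∀ w, μ (X ⁻¹' {w}) = ENNReal.ofReal (b w)) (g : Θ → ℝ) :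
    ∫ ω, g (X ω) ∂μ = ∑ w, b w * g w := by
  rw [← integral_map hX.aemeasurable (measurable_of_countable g).aestronglyMeasurable,
    integral_fintype .of_finite]
  refine Finset.sum_congr rfl fun w _ => ?_
  rw [Measure.real, Measure.map_apply hX (measurableSet_singleton w), hlaw,
    ENNReal.toReal_ofReal (hb w), smul_eq_mul]

theorem ae_tendsto_average_comp {X : ℕ → Ω → Θ} (hX : ∀ i, Measurable (X i))
    (hindep : Pairwise fun i j => IndepFun (X i) (X j) μ) (hb : ∀ w, 0 ≤ b w)
    (hlaw : ∀ i w, μ (X i ⁻¹' {w}) = ENNReal.ofReal (b w)) (g : Θ → ℝ) :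
    ∀ᵐ ω ∂μ, Tendsto (fun M : ℕ => (1 / (M : ℝ)) * ∑ i ∈ Finset.range M, g (X i ω))
      atTop (𝓝 (∑ w, b w * g w)) := by
  have hg : Measurable g := measurable_of_countable g
  have hident (i : ℕ) : IdentDistrib (X i) (X 0) μ μ :=
    identDistrib_of_measure_preimage_singleton (hX i) (hX 0) fun w => by rw [hlaw, hlaw]
  have hint : Integrable (fun ω => g (X 0 ω)) μ :=
    (integrable_map_measure hg.aestronglyMeasurable (hX 0).aemeasurable).mp .of_finite
  have hslln := strong_law_ae (fun i ω => g (X i ω)) hint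
    (fun i j hij => (hindep hij).comp hg hg) fun i => (hident i).comp hg
  rw [integral_comp_eq_sum_mul (hX 0) hb (hlaw 0)] at hslln
  simpa only [one_div, smul_eq_mul] using hslln

end LawOfLargeNumbers

lemma sum_mul_mul_logb_div {ι : Type*} (s : Finset ι) (a f : ι → ℝ) (hf : ∀ i ∈ s, f i ≠ 0)
    {c : ℝ} (hc : c ≠ 0) (base : ℝ) :
    ∑ i ∈ s, a i * (f i * Real.logb base (f i / c)) =
      ∑ i ∈ s, a i * (f i * Real.logb base (f i)) - (∑ i ∈ s, a i * f i) * Real.logb base c := by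
  rw [Finset.sum_mul, ← Finset.sum_sub_distrib]
  refine Finset.sum_congr rfl fun i hi => ?_
  rw [Real.logb_div (hf i hi) hc]
  ring

lemma average_mul_logb_normalized {M : ℕ} (hM : M ≠ 0) {p : ℕ → ℝ} (hp : ∀ i, 0 < p i) :
    (1 / (M : ℝ)) * ∑ i ∈ Finset.range M, p i * Real.logb 2 (M * p i / ∑ j ∈ Finset.range M, p j) =
      (1 / (M : ℝ)) * ∑ i ∈ Finset.range M, p i * Real.logb 2 (p i) -
        ((1 / (M : ℝ)) * ∑ i ∈ Finset.range M, p i) *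
          Real.logb 2 ((1 / (M : ℝ)) * ∑ i ∈ Finset.range M, p i) := by
  have hsum : 0 < ∑ j ∈ Finset.range M, p j :=
    Finset.sum_pos (fun j _ => hp j) (Finset.nonempty_range_iff.mpr hM)
  have hM' : (M : ℝ) ≠ 0 := Nat.cast_ne_zero.mpr hM
  have hrescale (i : ℕ) : (M : ℝ) * p i / ∑ j ∈ Finset.range M, p j =
      p i / ((1 / (M : ℝ)) * ∑ j ∈ Finset.range M, p j) := by
    field_simp
  simp only [hrescale]
  have := sum_mul_mul_logb_div (Finset.range M) (fun _ => 1 / (M : ℝ)) p (fun i _ => (hp i).ne')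
    (mul_ne_zero (one_div_ne_zero hM') hsum.ne') 2
  simpa only [← Finset.mul_sum] using this

theorem tendsto_average_mul_logb_normalized {p : ℕ → ℝ} (hp : ∀ i, 0 < p i) {m h : ℝ}
    (hm : m ≠ 0)
    (hmean : Tendsto (fun M : ℕ => (1 / (M : ℝ)) * ∑ i ∈ Finset.range M, p i) atTop (𝓝 m))
    (hent : Tendsto (fun M : ℕ => (1 / (M : ℝ)) * ∑ i ∈ Finset.range M, p i * Real.logb 2 (p i))
      atTop (𝓝 h)) :
    Tendsto (fun M : ℕ => (1 / (M : ℝ)) *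
        ∑ i ∈ Finset.range M, p i * Real.logb 2 (M * p i / ∑ j ∈ Finset.range M, p j))
      atTop (𝓝 (h - m * Real.logb 2 m)) := by
  have hlogb := (hmean.log hm).div_const (Real.log 2)
  refine (hent.sub (hmean.mul hlogb)).congr' ?_
  filter_upwards [eventually_ne_atTop 0] with M hM
  rw [average_mul_logb_normalized hM hp]
  rfl

theorem discretized_information_gain_consistent_general
    {Θ : Type*} [Fintype Θ] [MeasurableSpace Θ] [MeasurableSingletonClass Θ]
    {Q : Type*} [Fintype Q]
    {Ω : Type*} [MeasurableSpace Ω] (μ : Measure Ω) [IsProbabilityMeasure μ]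
    (b : Θ → ℝ) (hb0 : ∀ w, 0 < b w)
    (P : Q → Θ → ℝ) (hP : ∀ q w, P q w ∈ Set.Ioo (0 : ℝ) 1)
    (X : ℕ → Ω → Θ) (hmeas : ∀ i, Measurable (X i))
    (hindep : iIndepFun X μ)
    (hlaw : ∀ i w, μ (X i ⁻¹' {w}) = ENNReal.ofReal (b w)) :
    ∀ᵐ ω ∂μ, Tendsto
      (fun M : ℕ =>
        (1 / (M : ℝ)) * ∑ q : Q, ∑ i ∈ Finset.range M,
          P q (X i ω) *
            Real.logb 2 ((M : ℝ) * P q (X i ω)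
              / ∑ j ∈ Finset.range M, P q (X j ω)))
      atTop
      (nhds (∑ w, b w * ∑ q, P q w *
        Real.logb 2 (P q w / ∑ w', b w' * P q w'))) := by
  have : Nonempty Θ := (nonempty_of_isProbabilityMeasure μ).map (X 0)
  have hmarginal (q : Q) : 0 < ∑ w, b w * P q w :=
    Finset.sum_pos (fun w _ => mul_pos (hb0 w) (hP q w).1) Finset.univ_nonempty
  have hslln := ae_tendsto_average_comp hmeas (fun i j hij => hindep.indepFun hij)
    (fun w => (hb0 w).le) hlaw
  have hmean := ae_all_iff.2 fun q => hslln (P q)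
  have hent := ae_all_iff.2 fun q => hslln fun w => P q w * Real.logb 2 (P q w)
  filter_upwards [hmean, hent] with ω hmean hent
  have hlimit : ∑ w, b w * ∑ q, P q w * Real.logb 2 (P q w / ∑ w', b w' * P q w') =
      ∑ q, (∑ w, b w * (P q w * Real.logb 2 (P q w)) -
        (∑ w, b w * P q w) * Real.logb 2 (∑ w, b w * P q w)) := by
    simp only [Finset.mul_sum]
    rw [Finset.sum_comm]
    exact Finset.sum_congr rfl fun q _ =>
      sum_mul_mul_logb_div _ _ _ (fun w _ => (hP q w).1.ne') (hmarginal q).ne' 2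
  rw [hlimit]
  refine (tendsto_finsetSum Finset.univ fun q _ =>
    tendsto_average_mul_logb_normalized (fun i => (hP q (X i ω)).1) (hmarginal q).ne'
      (hmean q) (hent q)).congr fun M => (Finset.mul_sum _ _ _).symm

/-- consistency of the discretized information gain objective.
Let `b` be a probability mass function on a finite parameter set `Θ`, let
`P q w ∈ (0,1)` be the response model for a finite query `Q`, and let
`X 0, X 1, …` be i.i.d. samples from `b` (defined on a probability space
`(Ω, μ)`). Then the sample-based information gain
`(1/M) ∑_{q ∈ Q} ∑_{ω̄ ∈ Ω_M} P(q|ω̄) log₂( M·P(q|ω̄) / ∑_{ω' ∈ Ω_M} P(q|ω') )`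
(with `Ω_M = {X 0, …, X (M−1)}`) converges almost surely as `M → ∞` to the
mutual information
`I(ω; q | Q, b) = ∑_w b w ∑_q P(q|w) log₂( P(q|w) / ∑_{w'} b w' P(q|w') )`. -/
theorem discretized_information_gain_consistent
    {Θ : Type*} [Fintype Θ] [MeasurableSpace Θ] [MeasurableSingletonClass Θ]
    {Q : Type*} [Fintype Q]
    {Ω : Type*} [MeasurableSpace Ω] (μ : Measure Ω) [IsProbabilityMeasure μ]
    (b : Θ → ℝ) (hb0 : ∀ w, 0 < b w) (hb1 : ∑ w, b w = 1)
    (P : Q → Θ → ℝ) (hP : ∀ q w, P q w ∈ Set.Ioo (0 : ℝ) 1)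
    (X : ℕ → Ω → Θ) (hmeas : ∀ i, Measurable (X i))
    (hindep : iIndepFun X μ)
    (hlaw : ∀ i w, μ (X i ⁻¹' {w}) = ENNReal.ofReal (b w)) :
    ∀ᵐ ω ∂μ, Tendsto
      (fun M : ℕ =>
        (1 / (M : ℝ)) * ∑ q : Q, ∑ i ∈ Finset.range M,
          P q (X i ω) *
            Real.logb 2 ((M : ℝ) * P q (X i ω)
              / ∑ j ∈ Finset.range M, P q (X j ω)))
      atTop
      (nhds (∑ w, b w * ∑ q, P q w *
        Real.logb 2 (P q w / ∑ w', b w' * P q w'))) :=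
  discretized_information_gain_consistent_general μ b hb0 P hP X hmeas hindep hlaw
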